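/- Let ε > 0 and let C' be a k-clustering. Suppose that for all i, j ∈ [k]: |F_{i,j}(C') − F̂_{i,j}(C')| ≤ ε·|C_{ij} × (C_i \ C_{ij})|, and for all i₁ < i₂ and j in [k]: |F_{i₁,i₂,j}(C') − F̂_{i₁,i₂,j}(C')| ≤ ε·max{ |C_{i₁ j} × C_{i₂ j}|, |C_{i₁ j} × (C_{i₁} \ C_{i₁ j})|/k, |C_{i₂ j} × (C_{i₂} \ C_{i₂ j})|/k }. Then |f(C') − f̂(C')| ≤ 3ε·d(C, C'), where f(C') = cost(C') − cost(C), f̂(C') = (1/2) Σ_{i,j} F̂_{i,j}(C') + Σ_j Σ_{i₁<i₂} F̂_{i₁,i₂,j}(C'), and d is the disagreement distance. -/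

import Mathlib

/-!
Write `cost C' - cost C` as half the sum of `f_{u,v}` over the ordered pairs on which `C` and `C'`
disagree. The pairs that `C` joins and `C'` splits are exactly those counted by the `F_{i,j}`; the
pairs that `C'` joins and `C` splits are, once oriented by `i₁ < i₂`, those counted by the
`F_{i₁,i₂,j}`. So `f - f̂` is a signed sum of the given errors. Bound each `max` by the sum of its
entries: the sizes `|C_{ij} × (C_i \ C_{ij})|` add up to the number `S` of split ordered pairs,
the sizes `|C_{i₁j} × C_{i₂j}|` to the number `M` of merged pairs, and each term
`|C_{ij} × (C_i \ C_{ij})| / k` occurs for fewer than `k` pairs `i₁ < i₂`. The error is therefore at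
most `ε S / 2 + ε M + ε S ≤ 3ε (S / 2 + M) = 3ε d(C, C')`.
-/

open Finset

attribute [local instance] Classical.propDecidable

/-- A `k`-clustering of `V` is encoded by its cluster-assignment function `Cl : V → Fin k`;
two points are in the same cluster iff they have the same assigned index.
`cluster Cl i` is the `i`-th cluster `C_i`, as a finset. -/
noncomputable def cluster {V : Type*} [Fintype V] {k : ℕ} (Cl : V → Fin k) (i : Fin k) : Finset V :=
  Finset.univ.filter fun v => Cl v = i

/-- `cost_{u,v}(C) = 1[(u,v) ∈ E]·1[u ≢_C v] + 1[(u,v) ∉ E]·1[u ≡_C v]`. -/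
noncomputable def costuv {V : Type*} {k : ℕ} (G : SimpleGraph V) (Cl : V → Fin k) (u v : V) : ℝ :=
  (if G.Adj u v then (if Cl u = Cl v then 0 else 1) else (if Cl u = Cl v then 1 else 0))

/-- `cost(C)`: the number of unordered pairs of distinct points on which the clustering
`Cl` disagrees with the graph `G` (each unordered pair counted once, via half the sum
over ordered pairs). -/
noncomputable def cost {V : Type*} [Fintype V] {k : ℕ} (G : SimpleGraph V) (Cl : V → Fin k) : ℝ :=
  (1 / 2) * ∑ u : V, ∑ v : V, if u ≠ v then costuv G Cl u v else 0

/-- The disagreement distance between two `k`-clusterings: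
`d(C,C') = (1/2) Σ_{u ≠ v} (1[u ≡_{C'} v]·1[u ≢_C v] + 1[u ≡_C v]·1[u ≢_{C'} v])`. -/
noncomputable def dd {V : Type*} [Fintype V] {k : ℕ} (Cl Cl' : V → Fin k) : ℝ :=
  (1 / 2) * ∑ u : V, ∑ v : V, if u ≠ v then
      ((if Cl' u = Cl' v ∧ ¬Cl u = Cl v then (1 : ℝ) else 0) +
        (if Cl u = Cl v ∧ ¬Cl' u = Cl' v then (1 : ℝ) else 0))
    else 0

/-- `f_{u,v}(C') = cost_{u,v}(C') - cost_{u,v}(C)`. -/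
noncomputable def fuv {V : Type*} {k : ℕ} (G : SimpleGraph V) (Cl Cl' : V → Fin k) (u v : V) : ℝ :=
  costuv G Cl' u v - costuv G Cl u v

namespace CorrelationClustering

lemma sum_sum_filter_eq_sum {ι κ M : Type*} [Fintype κ] [DecidableEq κ] [AddCommMonoid M]
    (s : Finset ι) (g : ι → κ) (f : κ → ι → M) :
    ∑ j, ∑ i ∈ s with g i = j, f j i = ∑ i ∈ s, f (g i) i := by
  rw [← sum_fiberwise s g (fun i => f (g i) i)]
  exact sum_congr rfl fun j _ => sum_congr rfl fun i hi => by rw [(mem_filter.1 hi).2]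

lemma sum_sum_ite_lt_div_add_div_le {k : ℕ} (c : Fin k → ℝ) (hc : ∀ i, 0 ≤ c i) :
    ∑ i₁ : Fin k, ∑ i₂ : Fin k, (if i₁ < i₂ then c i₁ / k + c i₂ / k else 0) ≤ ∑ i, c i := by
  calc _ = ∑ i₁ : Fin k, ∑ i₂ : Fin k,
        ((if i₁ < i₂ then c i₁ / k else 0) + if i₂ < i₁ then c i₁ / k else 0) := by
        simp only [ite_add_zero, sum_add_distrib]
        rw [sum_comm (f := fun i₁ i₂ => if i₁ < i₂ then c i₂ / k else 0)]
    _ ≤ ∑ i₁ : Fin k, ∑ _i₂ : Fin k, c i₁ / k := by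
        gcongr with i₁ _ i₂ _
        have := div_nonneg (hc i₁) k.cast_nonneg
        split_ifs with h h' <;> first | exact absurd (h.trans h') (lt_irrefl _) | simp [this]
    _ = ∑ i, c i := by
        refine sum_congr rfl fun i _ => ?_
        rw [sum_const, card_univ, Fintype.card_fin, nsmul_eq_mul]
        have : (k : ℝ) ≠ 0 := by exact_mod_cast i.pos.ne'
        field_simp

lemma abs_sub_le_of_blockwise {k : ℕ} {ε : ℝ} (hε : 0 ≤ ε)
    (F Fhat a : Fin k → Fin k → ℝ) (F3 Fhat3 m : Fin k → Fin k → Fin k → ℝ)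
    (ha : ∀ i j, 0 ≤ a i j) (hm : ∀ i₁ i₂ j, 0 ≤ m i₁ i₂ j)
    (h1 : ∀ i j, |F i j - Fhat i j| ≤ ε * a i j)
    (h2 : ∀ i₁ i₂ j, i₁ < i₂ →
      |F3 i₁ i₂ j - Fhat3 i₁ i₂ j| ≤ ε * max (m i₁ i₂ j) (max (a i₁ j / k) (a i₂ j / k))) :
    |((1 / 2) * ∑ i, ∑ j, F i j + ∑ j, ∑ i₁, ∑ i₂, if i₁ < i₂ then F3 i₁ i₂ j else 0)
        - ((1 / 2) * ∑ i, ∑ j, Fhat i j + ∑ j, ∑ i₁, ∑ i₂, if i₁ < i₂ then Fhat3 i₁ i₂ j else 0)|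
      ≤ ε * ((3 / 2) * ∑ i, ∑ j, a i j + ∑ j, ∑ i₁, ∑ i₂, if i₁ < i₂ then m i₁ i₂ j else 0) := by
  have hsplit : |∑ i, ∑ j, (F i j - Fhat i j)| ≤ ε * ∑ i, ∑ j, a i j :=
    calc _ ≤ ∑ i, ∑ j, |F i j - Fhat i j| :=
          (abs_sum_le_sum_abs _ _).trans (sum_le_sum fun i _ => abs_sum_le_sum_abs _ _)
      _ ≤ ∑ i, ∑ j, ε * a i j := by gcongr with i _ j _; exact h1 i j
      _ = ε * ∑ i, ∑ j, a i j := by simp only [mul_sum]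
  have hmerge : |∑ j, ∑ i₁, ∑ i₂,
        ((if i₁ < i₂ then F3 i₁ i₂ j else 0) - if i₁ < i₂ then Fhat3 i₁ i₂ j else 0)|
      ≤ ε * ((∑ j, ∑ i₁, ∑ i₂, if i₁ < i₂ then m i₁ i₂ j else 0) + ∑ i, ∑ j, a i j) :=
    calc _ ≤ ∑ j, ∑ i₁, ∑ i₂,
          |(if i₁ < i₂ then F3 i₁ i₂ j else 0) - if i₁ < i₂ then Fhat3 i₁ i₂ j else 0| := by
          refine (abs_sum_le_sum_abs _ _).trans (sum_le_sum fun j _ => ?_)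
          exact (abs_sum_le_sum_abs _ _).trans (sum_le_sum fun i₁ _ => abs_sum_le_sum_abs _ _)
      _ ≤ ∑ j, ∑ i₁, ∑ i₂, ε * ((if i₁ < i₂ then m i₁ i₂ j else 0)
            + if i₁ < i₂ then a i₁ j / k + a i₂ j / k else 0) := by
          gcongr with j _ i₁ _ i₂ _
          split_ifs with h
          · refine (h2 i₁ i₂ j h).trans (mul_le_mul_of_nonneg_left ?_ hε)
            have := div_nonneg (ha i₁ j) k.cast_nonneg
            have := div_nonneg (ha i₂ j) k.cast_nonneg
            have := hm i₁ i₂ j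
            exact max_le (by linarith) (max_le (by linarith) (by linarith))
          · simp
      _ ≤ ε * ((∑ j, ∑ i₁, ∑ i₂, if i₁ < i₂ then m i₁ i₂ j else 0) + ∑ j, ∑ i, a i j) := by
          simp only [← mul_sum, sum_add_distrib]
          refine mul_le_mul_of_nonneg_left (add_le_add_right ?_ _) hε
          exact sum_le_sum fun j _ => sum_sum_ite_lt_div_add_div_le (fun i => a i j) (ha · j)
      _ = _ := by rw [sum_comm (f := fun j i => a i j)]
  calc _ = |(1 / 2) * ∑ i, ∑ j, (F i j - Fhat i j) + ∑ j, ∑ i₁, ∑ i₂,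
          ((if i₁ < i₂ then F3 i₁ i₂ j else 0) - if i₁ < i₂ then Fhat3 i₁ i₂ j else 0)| := by
        simp only [sum_sub_distrib]
        ring_nf
    _ ≤ (1 / 2) * |∑ i, ∑ j, (F i j - Fhat i j)| + |∑ j, ∑ i₁, ∑ i₂,
          ((if i₁ < i₂ then F3 i₁ i₂ j else 0) - if i₁ < i₂ then Fhat3 i₁ i₂ j else 0)| := by
        refine (abs_add_le _ _).trans_eq ?_
        rw [abs_mul, abs_of_pos (by norm_num : (0 : ℝ) < 1 / 2)]
    _ ≤ _ := by linarith

section Pointwise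
variable {V : Type*} {k : ℕ} (G : SimpleGraph V) (Cl Cl' : V → Fin k)

lemma fuv_comm (u v : V) : fuv G Cl Cl' u v = fuv G Cl Cl' v u := by
  simp [fuv, costuv, G.adj_comm, eq_comm]

-- `f_{u,v}` vanishes on the pairs where `C` and `C'` agree.
lemma fuv_eq_ite_split_add_ite_merge (u v : V) :
    fuv G Cl Cl' u v = (if Cl u = Cl v ∧ ¬Cl' u = Cl' v then fuv G Cl Cl' u v else 0)
      + (if Cl' u = Cl' v ∧ ¬Cl u = Cl v then fuv G Cl Cl' u v else 0) := by
  by_cases h : Cl u = Cl v <;> by_cases h' : Cl' u = Cl' v <;> simp [fuv, costuv, h, h']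

end Pointwise

variable {V : Type*} [Fintype V] {k : ℕ}

lemma mem_cluster {Cl : V → Fin k} {i : Fin k} {v : V} : v ∈ cluster Cl i ↔ Cl v = i := by
  simp [cluster]

lemma sum_sum_sum_cluster_inter (Cl Cl' : V → Fin k) (f : Fin k → Fin k → V → ℝ) :
    ∑ i, ∑ j, ∑ u ∈ cluster Cl i ∩ cluster Cl' j, f i j u = ∑ u, f (Cl u) (Cl' u) u := by
  have hinter : ∀ i j, cluster Cl i ∩ cluster Cl' j = {u ∈ cluster Cl i | Cl' u = j} := by
    intro i j; ext u; simp [mem_cluster]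
  simp_rw [hinter, sum_sum_filter_eq_sum]
  exact sum_sum_filter_eq_sum univ Cl fun i u => f i (Cl' u) u

noncomputable def splitSum (Cl Cl' : V → Fin k) (g : V → V → ℝ) : ℝ :=
  ∑ u, ∑ v, if Cl u = Cl v ∧ ¬Cl' u = Cl' v then g u v else 0

noncomputable def mergeSum (Cl Cl' : V → Fin k) (g : V → V → ℝ) : ℝ :=
  ∑ u, ∑ v, if Cl' u = Cl' v ∧ Cl u < Cl v then g u v else 0

lemma sum_blocks_eq_splitSum (Cl Cl' : V → Fin k) (g : V → V → ℝ) :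
    ∑ i, ∑ j, ∑ u ∈ cluster Cl i ∩ cluster Cl' j,
        ∑ v ∈ cluster Cl i \ (cluster Cl i ∩ cluster Cl' j), g u v
      = splitSum Cl Cl' g := by
  rw [sum_sum_sum_cluster_inter Cl Cl' fun i j u =>
    ∑ v ∈ cluster Cl i \ (cluster Cl i ∩ cluster Cl' j), g u v]
  refine sum_congr rfl fun u _ => ?_
  rw [← sum_filter]
  congr 1
  ext v; simp [mem_cluster, eq_comm]

lemma sum_pair_blocks_eq_mergeSum (Cl Cl' : V → Fin k) (g : V → V → ℝ) :
    ∑ j, ∑ i₁, ∑ i₂, (if i₁ < i₂ then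
        ∑ u ∈ cluster Cl i₁ ∩ cluster Cl' j, ∑ v ∈ cluster Cl i₂ ∩ cluster Cl' j, g u v else 0)
      = mergeSum Cl Cl' g := by
  have hinter : ∀ i j, cluster Cl i ∩ cluster Cl' j = {v ∈ cluster Cl' j | Cl v = i} := by
    intro i j; ext v; simp [mem_cluster, and_comm]
  calc _ = ∑ i₁, ∑ j, ∑ u ∈ cluster Cl i₁ ∩ cluster Cl' j,
        ∑ i₂, ∑ v ∈ cluster Cl i₂ ∩ cluster Cl' j, if i₁ < i₂ then g u v else 0 := by
        rw [sum_comm]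
        refine sum_congr rfl fun i₁ _ => sum_congr rfl fun j _ => ?_
        rw [sum_comm]
        exact sum_congr rfl fun i₂ _ => by split_ifs <;> simp
    _ = ∑ u, ∑ v ∈ cluster Cl' (Cl' u), if Cl u < Cl v then g u v else 0 := by
        rw [sum_sum_sum_cluster_inter Cl Cl' fun i₁ j u =>
          ∑ i₂, ∑ v ∈ cluster Cl i₂ ∩ cluster Cl' j, if i₁ < i₂ then g u v else 0]
        simp_rw [hinter, sum_sum_filter_eq_sum]
    _ = mergeSum Cl Cl' g := by
        simp only [mergeSum, cluster, sum_filter, ← ite_and]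
        exact sum_congr rfl fun u _ => sum_congr rfl fun v _ => by simp only [eq_comm]

lemma sum_ite_merge_eq_two_mul_mergeSum (Cl Cl' : V → Fin k) (g : V → V → ℝ)
    (hg : ∀ u v, g u v = g v u) :
    ∑ u, ∑ v, (if Cl' u = Cl' v ∧ ¬Cl u = Cl v then g u v else 0) = 2 * mergeSum Cl Cl' g := by
  have horient : ∀ u v, (if Cl' u = Cl' v ∧ ¬Cl u = Cl v then g u v else 0)
      = (if Cl' u = Cl' v ∧ Cl u < Cl v then g u v else 0)
        + (if Cl' v = Cl' u ∧ Cl v < Cl u then g v u else 0) := by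
    intro u v
    rw [hg v u]
    rcases lt_trichotomy (Cl u) (Cl v) with h | h | h
    · simp [h, h.ne, h.not_gt, eq_comm]
    · simp [h]
    · simp [h, h.ne', h.not_gt, eq_comm]
  simp_rw [horient, sum_add_distrib]
  rw [sum_comm (f := fun u v => if Cl' v = Cl' u ∧ Cl v < Cl u then g v u else 0)]
  unfold mergeSum
  ring

variable (G : SimpleGraph V) (Cl Cl' : V → Fin k)

lemma cost_sub_cost :
    cost G Cl' - cost G Cl = (1 / 2) * splitSum Cl Cl' (fuv G Cl Cl') + mergeSum Cl Cl' (fuv G Cl Cl') := by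
  have hsum : cost G Cl' - cost G Cl = (1 / 2) * ∑ u, ∑ v, fuv G Cl Cl' u v := by
    simp only [cost, ← mul_sub, ← sum_sub_distrib]
    congr 1
    refine sum_congr rfl fun u _ => sum_congr rfl fun v _ => ?_
    by_cases h : u = v <;> simp [h, fuv, costuv]
  have hpairs : ∑ u, ∑ v, fuv G Cl Cl' u v = splitSum Cl Cl' (fuv G Cl Cl')
      + ∑ u, ∑ v, (if Cl' u = Cl' v ∧ ¬Cl u = Cl v then fuv G Cl Cl' u v else 0) := by
    rw [splitSum, ← sum_add_distrib]
    exact sum_congr rfl fun u _ => by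
      rw [← sum_add_distrib]; exact sum_congr rfl fun v _ => fuv_eq_ite_split_add_ite_merge G Cl Cl' u v
  rw [hsum, hpairs, sum_ite_merge_eq_two_mul_mergeSum Cl Cl' _ (fuv_comm G Cl Cl')]
  ring

lemma dd_eq : dd Cl Cl' = (1 / 2) * splitSum Cl Cl' (fun _ _ => 1) + mergeSum Cl Cl' (fun _ _ => 1) := by
  have hpairs : ∀ u v, (if u ≠ v then
      ((if Cl' u = Cl' v ∧ ¬Cl u = Cl v then (1 : ℝ) else 0) +
        (if Cl u = Cl v ∧ ¬Cl' u = Cl' v then (1 : ℝ) else 0)) else 0)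
      = (if Cl' u = Cl' v ∧ ¬Cl u = Cl v then 1 else 0)
        + (if Cl u = Cl v ∧ ¬Cl' u = Cl' v then 1 else 0) := by
    intro u v
    by_cases h : u = v <;> simp [h]
  simp only [dd, hpairs, sum_add_distrib]
  rw [sum_ite_merge_eq_two_mul_mergeSum Cl Cl' (fun _ _ => 1) fun _ _ => rfl, splitSum]
  ring

end CorrelationClustering

open CorrelationClustering

/-- deterministic part of Lemma 3 of the paper.  Let `ε > 0` and let
`C'` be a `k`-clustering.  Suppose the real numbers `F̂_{i,j}` and `F̂_{i₁,i₂,j}` satisfy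
`|F_{i,j}(C') − F̂_{i,j}| ≤ ε·|C_{ij} × (C_i \ C_{ij})|` for all `i, j`, and
`|F_{i₁,i₂,j}(C') − F̂_{i₁,i₂,j}| ≤ ε·max{|C_{i₁j} × C_{i₂j}|, |C_{i₁j} × (C_{i₁}\C_{i₁j})|/k,
|C_{i₂j} × (C_{i₂}\C_{i₂j})|/k}` for all `i₁ < i₂`, `j`.  Then, with
`f̂(C') = (1/2) Σ_{i,j} F̂_{i,j} + Σ_j Σ_{i₁<i₂} F̂_{i₁,i₂,j}` and
`f(C') = cost(C') − cost(C)`, we have `|f(C') − f̂(C')| ≤ 3ε·d(C,C')`. -/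
theorem stmt16 {V : Type*} [Fintype V] {k : ℕ} (G : SimpleGraph V)
    (Cl Cl' : V → Fin k) (ε : ℝ) (hε : 0 < ε)
    (Fhat : Fin k → Fin k → ℝ) (Fhat3 : Fin k → Fin k → Fin k → ℝ)
    (h1 : ∀ i j : Fin k,
      |(∑ u ∈ cluster Cl i ∩ cluster Cl' j,
            ∑ v ∈ cluster Cl i \ (cluster Cl i ∩ cluster Cl' j), fuv G Cl Cl' u v)
          - Fhat i j|
        ≤ ε * (((cluster Cl i ∩ cluster Cl' j).card : ℝ) *
            ((cluster Cl i \ (cluster Cl i ∩ cluster Cl' j)).card : ℝ)))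
    (h2 : ∀ i₁ i₂ j : Fin k, i₁ < i₂ →
      |(∑ u ∈ cluster Cl i₁ ∩ cluster Cl' j,
            ∑ v ∈ cluster Cl i₂ ∩ cluster Cl' j, fuv G Cl Cl' u v)
          - Fhat3 i₁ i₂ j|
        ≤ ε * max
            (((cluster Cl i₁ ∩ cluster Cl' j).card : ℝ) *
              ((cluster Cl i₂ ∩ cluster Cl' j).card : ℝ))
            (max
              (((cluster Cl i₁ ∩ cluster Cl' j).card : ℝ) *
                  ((cluster Cl i₁ \ (cluster Cl i₁ ∩ cluster Cl' j)).card : ℝ) / (k : ℝ))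
              (((cluster Cl i₂ ∩ cluster Cl' j).card : ℝ) *
                  ((cluster Cl i₂ \ (cluster Cl i₂ ∩ cluster Cl' j)).card : ℝ) / (k : ℝ)))) :
    |(cost G Cl' - cost G Cl)
        - ((1 / 2) * ∑ i : Fin k, ∑ j : Fin k, Fhat i j
            + ∑ j : Fin k, ∑ i₁ : Fin k, ∑ i₂ : Fin k,
                if i₁ < i₂ then Fhat3 i₁ i₂ j else 0)|
      ≤ 3 * ε * dd Cl Cl' := by
  have hsplit := sum_blocks_eq_splitSum Cl Cl' fun _ _ => (1 : ℝ)
  have hmerge := sum_pair_blocks_eq_mergeSum Cl Cl' fun _ _ => (1 : ℝ)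
  simp only [sum_const, nsmul_eq_mul, mul_one] at hsplit hmerge
  rw [cost_sub_cost, dd_eq, ← hsplit, ← hmerge, ← sum_blocks_eq_splitSum,
    ← sum_pair_blocks_eq_mergeSum]
  refine (abs_sub_le_of_blockwise hε.le _ Fhat _ _ Fhat3 _ (fun _ _ => by positivity)
    (fun _ _ _ => by positivity) h1 h2).trans ?_
  have hm : 0 ≤ ∑ j : Fin k, ∑ i₁ : Fin k, ∑ i₂ : Fin k, if i₁ < i₂ then
      ((cluster Cl i₁ ∩ cluster Cl' j).card : ℝ) * ((cluster Cl i₂ ∩ cluster Cl' j).card : ℝ)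
      else 0 := by positivity
  nlinarith
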